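/- arXiv:1001.3702 — 6 statements merged into one kernel-verified Lean document; each statement's English description precedes it below -/
import Mathlib

section
/- Any configuration of 5 distinct points on the unit sphere S² ⊂ ℝ³ contains two points at Euclidean distance at most √2 from each other. -/
/-!
Unit vectors at distance greater than `√2` have negative inner product, so it suffices to show
that at most `d + 1` vectors of `ℝᵈ` can be pairwise at obtuse angles. Given such a family and
one of its members `w`, every other member has negative inner product with `w`. Split a linear
relation `∑ cᵢ vᵢ = 0` among them into its positive and negative parts, `u = ∑ cᵢ⁺ vᵢ = ∑ cᵢ⁻ vᵢ`.
Pairing the two expressions gives `‖u‖² ≤ 0`, so `u = 0`, and pairing `u` with `w` then forces all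
coefficients to vanish. Hence the other members are linearly independent, and there are at
most `d` of them.
-/

open Finset RealInnerProductSpace

section ObtuseFamily

variable {E : Type*} [NormedAddCommGroup E] [InnerProductSpace ℝ E] {ι : Type*} [Fintype ι]

theorem eq_zero_of_sum_smul_eq_zero_of_inner_neg {v : ι → E} {w : E} {a : ι → ℝ}
    (ha : ∀ i, 0 ≤ a i) (hw : ∀ i, ⟪v i, w⟫ < 0) (hsum : ∑ i, a i • v i = 0) (i : ι) :
    a i = 0 := by
  have hterms : ∑ j, a j * ⟪v j, w⟫ = 0 := by
    simp only [← real_inner_smul_left, ← sum_inner, hsum, inner_zero_left]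
  have hnonpos : ∀ j ∈ univ, a j * ⟪v j, w⟫ ≤ 0 :=
    fun j _ ↦ mul_nonpos_of_nonneg_of_nonpos (ha j) (hw j).le
  have hi := (sum_eq_zero_iff_of_nonpos hnonpos).mp hterms i (mem_univ i)
  exact (mul_eq_zero.mp hi).resolve_right (hw i).ne

theorem inner_sum_smul_nonpos_of_pairwise_inner_neg {v : ι → E}
    (hv : Pairwise fun i j ↦ ⟪v i, v j⟫ < 0) {a b : ι → ℝ} (ha : ∀ i, 0 ≤ a i)
    (hb : ∀ i, 0 ≤ b i) (hab : ∀ i, a i * b i = 0) :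
    ⟪∑ i, a i • v i, ∑ j, b j • v j⟫ ≤ 0 := by
  rw [sum_inner]
  refine sum_nonpos fun i _ ↦ ?_
  rw [inner_sum]
  refine sum_nonpos fun j _ ↦ ?_
  rw [real_inner_smul_left, real_inner_smul_right]
  rcases eq_or_ne i j with rfl | hij
  · rw [← mul_assoc, hab, zero_mul]
  · exact mul_nonpos_of_nonneg_of_nonpos (ha i) (mul_nonpos_of_nonneg_of_nonpos (hb j) (hv hij).le)

theorem linearIndependent_of_pairwise_inner_neg {v : ι → E} {w : E}
    (hv : Pairwise fun i j ↦ ⟪v i, v j⟫ < 0) (hw : ∀ i, ⟪v i, w⟫ < 0) :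
    LinearIndependent ℝ v := by
  rw [Fintype.linearIndependent_iff]
  intro c hc i
  have hsplit : ∑ j, (c j)⁺ • v j = ∑ j, (c j)⁻ • v j := by
    rw [← sub_eq_zero, ← sum_sub_distrib]
    simpa only [← sub_smul, posPart_sub_negPart] using hc
  have hdisjoint : ∀ j, (c j)⁺ * (c j)⁻ = 0 := fun j ↦ by
    rcases le_total (c j) 0 with h | h <;> simp [h]
  have hpos_zero : ∑ j, (c j)⁺ • v j = 0 := by
    rw [← real_inner_self_nonpos]
    nth_rw 2 [hsplit]
    exact inner_sum_smul_nonpos_of_pairwise_inner_neg hv (fun j ↦ posPart_nonneg _)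
      (fun j ↦ negPart_nonneg _) hdisjoint
  rw [← posPart_sub_negPart (c i),
    eq_zero_of_sum_smul_eq_zero_of_inner_neg (fun j ↦ posPart_nonneg _) hw hpos_zero i,
    eq_zero_of_sum_smul_eq_zero_of_inner_neg (fun j ↦ negPart_nonneg _) hw
      (hsplit ▸ hpos_zero) i, sub_zero]

theorem card_le_finrank_add_one_of_pairwise_inner_neg [FiniteDimensional ℝ E] {v : ι → E}
    (hv : Pairwise fun i j ↦ ⟪v i, v j⟫ < 0) :
    Fintype.card ι ≤ Module.finrank ℝ E + 1 := by
  rcases isEmpty_or_nonempty ι with hι | ⟨⟨i₀⟩⟩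
  · simp
  classical
  have hindep : LinearIndependent ℝ fun i : {i // i ≠ i₀} ↦ v i :=
    linearIndependent_of_pairwise_inner_neg (w := v i₀)
      (fun i j hij ↦ hv (Subtype.coe_injective.ne hij)) (fun i ↦ hv i.2)
  have hcard := hindep.fintype_card_le_finrank
  rw [Fintype.card_subtype_compl, Fintype.card_subtype_eq] at hcard
  omega

end ObtuseFamily

theorem dist_le_sqrt_two_iff_inner_nonneg {E : Type*} [NormedAddCommGroup E]
    [InnerProductSpace ℝ E] {x y : E} (hx : ‖x‖ = 1) (hy : ‖y‖ = 1) :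
    dist x y ≤ √2 ↔ 0 ≤ ⟪x, y⟫ := by
  rw [Real.le_sqrt dist_nonneg zero_le_two, dist_eq_norm, norm_sub_sq_real, hx, hy]
  constructor <;> intro h <;> linarith

theorem five_points_on_sphere_close_pair_general
    (p : Fin 5 → EuclideanSpace ℝ (Fin 3))
    (hsphere : ∀ i, ‖p i‖ = 1) :
    ∃ i j, i ≠ j ∧ dist (p i) (p j) ≤ Real.sqrt 2 := by
  by_contra! hfar
  have hobtuse : Pairwise fun i j ↦ ⟪p i, p j⟫ < 0 := fun i j hij ↦
    not_le.mp <| (dist_le_sqrt_two_iff_inner_nonneg (hsphere i) (hsphere j)).not.mp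
      (hfar i j hij).not_ge
  have hcard := card_le_finrank_add_one_of_pairwise_inner_neg hobtuse
  simp at hcard

/-- Any configuration of 5 distinct points on the unit sphere S² ⊂ ℝ³ contains
two points at Euclidean distance at most √2 from each other. -/
theorem five_points_on_sphere_close_pair
    (p : Fin 5 → EuclideanSpace ℝ (Fin 3))
    (hsphere : ∀ i, ‖p i‖ = 1)
    (hdist : Function.Injective p) :
    ∃ i j, i ≠ j ∧ dist (p i) (p j) ≤ Real.sqrt 2 :=
  five_points_on_sphere_close_pair_general p hsphere
end

section
/- Let A be an arc of a circle C of radius r, with arc length d, and let A' be the chord joining the endpoints of A. Then every point of A lies within distance d²/(8r) of some point of A' (in fact strictly within, when d > 0). -/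
/-!
Put the arc at angles `α - m ≤ α + ψ ≤ α + m`, so that `d = 2 r m` and the bound is `r m² / 2`.
After rotating by `-α`, the squared distance from the arc point to the chord point with affine
parameter `t ∈ [-1, 1]` is `r² ((cos ψ - cos m)² + (sin ψ - t sin m)²)`. For `m ≤ π` the foot of
the perpendicular (if `m ≤ π/2`) or the midpoint of the chord (if `cos m ≤ 0`) is within the
sagitta `r (1 - cos m) < r m² / 2`; for `m > π` an endpoint is within the diameter `2 r < r m² / 2`.
-/

open Real Set Metric

noncomputable def circlePoint (c : EuclideanSpace ℝ (Fin 2)) (r θ : ℝ) : EuclideanSpace ℝ (Fin 2) :=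
  c + r • !₂[cos θ, sin θ]

section

variable {c : EuclideanSpace ℝ (Fin 2)} {r α ψ m θ θ₀ θ₁ : ℝ}

lemma dist_circlePoint_smul_add_smul_sq {a b : ℝ} (hab : a + b = 1) :
    dist (circlePoint c r (α + ψ)) (a • circlePoint c r (α - m) + b • circlePoint c r (α + m)) ^ 2
      = r ^ 2 * ((cos ψ - cos m) ^ 2 + (sin ψ - (b - a) * sin m) ^ 2) := by
  obtain rfl : b = 1 - a := by linarith
  rw [EuclideanSpace.dist_eq, sq_sqrt (by positivity)]
  simp only [circlePoint, Fin.sum_univ_two, Real.dist_eq, sq_abs, PiLp.add_apply, PiLp.smul_apply,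
    smul_eq_mul, Matrix.cons_val_zero, Matrix.cons_val_one]
  rw [cos_add α ψ, cos_add α m, cos_sub α m, sin_add α ψ, sin_add α m, sin_sub α m]
  linear_combination
    r ^ 2 * ((cos ψ - cos m) ^ 2 + (sin ψ - (1 - 2 * a) * sin m) ^ 2) * sin_sq_add_cos_sq α

lemma infDist_circlePoint_segment_le (hr : 0 ≤ r) {t B : ℝ} (ht : t ∈ Icc (-1) 1) (hB : 0 ≤ B)
    (h : (cos ψ - cos m) ^ 2 + (sin ψ - t * sin m) ^ 2 ≤ B ^ 2) :
    infDist (circlePoint c r (α + ψ)) (segment ℝ (circlePoint c r (α - m)) (circlePoint c r (α + m)))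
      ≤ r * B := by
  have hq : ((1 - t) / 2) • circlePoint c r (α - m) + ((1 + t) / 2) • circlePoint c r (α + m)
      ∈ segment ℝ (circlePoint c r (α - m)) (circlePoint c r (α + m)) :=
    ⟨_, _, by linarith [ht.2], by linarith [ht.1], by ring, rfl⟩
  refine (infDist_le_dist_of_mem hq).trans ((pow_le_pow_iff_left₀ dist_nonneg (by positivity)
    two_ne_zero).1 ?_)
  rw [dist_circlePoint_smul_add_smul_sq (by ring), mul_pow,
    show (1 + t) / 2 - (1 - t) / 2 = t by ring]
  gcongr

lemma exists_sq_le_one_sub_cos_sq (hm : m ≤ π) (hψ : |ψ| ≤ m) :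
    ∃ t ∈ Icc (-1 : ℝ) 1, (cos ψ - cos m) ^ 2 + (sin ψ - t * sin m) ^ 2 ≤ (1 - cos m) ^ 2 := by
  have hcos : cos m ≤ cos ψ := cos_abs ψ ▸ cos_le_cos_of_nonneg_of_le_pi (abs_nonneg ψ) hm hψ
  rcases le_total m (π / 2) with hm' | hm'
  · have hsin : |sin ψ| ≤ sin m := by
      rw [abs_sin_eq_sin_abs_of_abs_le_pi (hψ.trans hm)]
      exact sin_le_sin_of_le_of_le_pi_div_two (by linarith [abs_nonneg ψ, pi_pos]) hm' hψ
    refine ⟨sin ψ / sin m, abs_le.1 ?_, ?_⟩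
    · rw [abs_div, abs_of_nonneg ((abs_nonneg _).trans hsin)]
      exact div_le_one_of_le₀ hsin ((abs_nonneg _).trans hsin)
    · have hfoot : sin ψ - sin ψ / sin m * sin m = 0 := by
        rcases ((abs_nonneg _).trans hsin).eq_or_lt with h | h
        · rw [← h] at hsin; simp [abs_nonpos_iff.1 hsin]
        · field_simp; ring
      rw [hfoot]
      nlinarith [cos_le_one ψ]
  · have hcm : cos m ≤ 0 := cos_nonpos_of_pi_div_two_le_of_le hm' (by linarith [pi_pos])
    refine ⟨0, ⟨by norm_num, by norm_num⟩, ?_⟩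
    nlinarith [sin_sq_add_cos_sq ψ, cos_le_one ψ]

lemma infDist_circlePoint_segment_lt (hr : 0 < r) (hm : 0 < m) (hψ : |ψ| ≤ m) :
    infDist (circlePoint c r (α + ψ)) (segment ℝ (circlePoint c r (α - m)) (circlePoint c r (α + m)))
      < r * m ^ 2 / 2 := by
  rcases le_or_gt m π with hmπ | hmπ
  · obtain ⟨t, ht, hsq⟩ := exists_sq_le_one_sub_cos_sq hmπ hψ
    calc _ ≤ r * (1 - cos m) :=
          infDist_circlePoint_segment_le hr.le ht (by linarith [cos_le_one m]) hsq
      _ < r * (m ^ 2 / 2) := by gcongr; linarith [one_sub_sq_div_two_lt_cos hm.ne']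
      _ = r * m ^ 2 / 2 := by ring
  · have hsq : (cos ψ - cos m) ^ 2 + (sin ψ - 1 * sin m) ^ 2 ≤ 2 ^ 2 := by
      nlinarith [sin_sq_add_cos_sq ψ, sin_sq_add_cos_sq m, sq_nonneg (cos ψ + cos m),
        sq_nonneg (sin ψ + sin m)]
    calc _ ≤ r * 2 := infDist_circlePoint_segment_le hr.le ⟨by norm_num, le_rfl⟩ zero_le_two hsq
      _ < r * m ^ 2 / 2 := by
        have : 2 ^ 2 < m ^ 2 := by gcongr; linarith [pi_gt_three]
        nlinarith


lemma infDist_circlePoint_segment_lt_of_mem_Icc (hr : 0 < r) (hθ : θ ∈ Icc θ₀ θ₁) (h : θ₀ < θ₁) :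
    infDist (circlePoint c r θ) (segment ℝ (circlePoint c r θ₀) (circlePoint c r θ₁))
      < r * (θ₁ - θ₀) ^ 2 / 8 := by
  obtain ⟨α, m, ψ, rfl, rfl, rfl⟩ : ∃ α m ψ, θ₀ = α - m ∧ θ₁ = α + m ∧ θ = α + ψ :=
    ⟨(θ₀ + θ₁) / 2, (θ₁ - θ₀) / 2, θ - (θ₀ + θ₁) / 2, by ring, by ring, by ring⟩
  have hψ : |ψ| ≤ m := abs_le.2 ⟨by linarith [hθ.1], by linarith [hθ.2]⟩
  calc _ < r * m ^ 2 / 2 := infDist_circlePoint_segment_lt hr (by linarith) hψ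
    _ = r * (α + m - (α - m)) ^ 2 / 8 := by ring

lemma infDist_circlePoint_segment_le_of_mem_Icc (hr : 0 < r) (hθ : θ ∈ Icc θ₀ θ₁) :
    infDist (circlePoint c r θ) (segment ℝ (circlePoint c r θ₀) (circlePoint c r θ₁))
      ≤ r * (θ₁ - θ₀) ^ 2 / 8 := by
  rcases (hθ.1.trans hθ.2).eq_or_lt with rfl | h
  · obtain rfl : θ = θ₀ := le_antisymm hθ.2 hθ.1
    rw [infDist_zero_of_mem (left_mem_segment ℝ _ _)]
    positivity
  · exact (infDist_circlePoint_segment_lt_of_mem_Icc hr hθ h).le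

end

theorem arc_close_to_chord_general (c : EuclideanSpace ℝ (Fin 2)) (r : ℝ) (hr : 0 < r)
    (θ₀ d : ℝ)
    (pt : ℝ → EuclideanSpace ℝ (Fin 2))
    (hpt : ∀ θ, pt θ = ![c 0 + r * Real.cos θ, c 1 + r * Real.sin θ]) :
    ∀ θ ∈ Set.Icc θ₀ (θ₀ + d / r),
      Metric.infDist (pt θ) (segment ℝ (pt θ₀) (pt (θ₀ + d / r))) ≤ d ^ 2 / (8 * r) ∧
      (0 < d → Metric.infDist (pt θ) (segment ℝ (pt θ₀) (pt (θ₀ + d / r))) < d ^ 2 / (8 * r)) := by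
  obtain rfl : pt = circlePoint c r := funext fun θ ↦ by
    ext i; fin_cases i <;> simp [hpt, circlePoint]
  intro θ hθ
  have hlength : r * (θ₀ + d / r - θ₀) ^ 2 / 8 = d ^ 2 / (8 * r) := by field_simp; ring
  rw [← hlength]
  exact ⟨infDist_circlePoint_segment_le_of_mem_Icc hr hθ,
    fun hd ↦ infDist_circlePoint_segment_lt_of_mem_Icc hr hθ (by simp [hd, hr])⟩

/-- Every point of a circular arc of arc length d on a circle of radius r lies
within d²/(8r) of the chord joining the endpoints of the arc (strictly within
when d > 0). -/
theorem arc_close_to_chord (c : EuclideanSpace ℝ (Fin 2)) (r : ℝ) (hr : 0 < r)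
    (θ₀ d : ℝ) (hd : 0 ≤ d)
    (pt : ℝ → EuclideanSpace ℝ (Fin 2))
    (hpt : ∀ θ, pt θ = ![c 0 + r * Real.cos θ, c 1 + r * Real.sin θ]) :
    ∀ θ ∈ Set.Icc θ₀ (θ₀ + d / r),
      Metric.infDist (pt θ) (segment ℝ (pt θ₀) (pt (θ₀ + d / r))) ≤ d ^ 2 / (8 * r) ∧
      (0 < d → Metric.infDist (pt θ) (segment ℝ (pt θ₀) (pt (θ₀ + d / r))) < d ^ 2 / (8 * r)) :=
  arc_close_to_chord_general c r hr θ₀ d pt hpt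
end

section
/- Define ψ(x,y,r) = ((1+r²+2rx+x²+y²)(1+r²+2ry+x²+y²)) / ((1+x²+y²)(1+2r²+x²+y²+2rx+2ry)). For all x,y ≥ 0 and r ∈ (0,1], ψ(x,y,r) ≤ 3/2, with the maximum value 3/2 attained at r = 1 and x = y = (√3 − 1)/2. -/
/-!
Clearing the (always positive) denominator, `3·den − 2·num` is the sum of squares
`(x² + y² + r x + r y − r²)² + 5 (r (x − y))²` plus `(1 − r²)` times a positive quantity,
so `ψ ≤ 3/2` whenever `r² ≤ 1`. At `r = 1`, `x = y` only the first square survives, and it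
vanishes exactly when `2x² + 2x = 1`, i.e. at `x = (√3 − 1)/2`.
-/

namespace Psi

noncomputable def num (x y r : ℝ) : ℝ :=
  (1 + r ^ 2 + 2 * r * x + x ^ 2 + y ^ 2) * (1 + r ^ 2 + 2 * r * y + x ^ 2 + y ^ 2)

noncomputable def den (x y r : ℝ) : ℝ :=
  (1 + x ^ 2 + y ^ 2) * (1 + 2 * r ^ 2 + x ^ 2 + y ^ 2 + 2 * r * x + 2 * r * y)

theorem den_pos (x y r : ℝ) : 0 < den x y r := by
  have : den x y r = (1 + x ^ 2 + y ^ 2) * (1 + (x + r) ^ 2 + (y + r) ^ 2) := by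
    unfold den; ring
  rw [this]
  positivity

theorem three_mul_den_sub_two_mul_num (x y r : ℝ) :
    3 * den x y r - 2 * num x y r =
      (x ^ 2 + y ^ 2 + r * x + r * y - r ^ 2) ^ 2 + 5 * (r * (x - y)) ^ 2 +
        (1 - r ^ 2) * (1 + r ^ 2 + x ^ 2 + y ^ 2 + (x + r) ^ 2 + (y + r) ^ 2) := by
  unfold num den; ring

theorem num_div_den_le_three_halves (x y r : ℝ) (hr : r ^ 2 ≤ 1) :
    num x y r / den x y r ≤ 3 / 2 := by
  rw [div_le_div_iff₀ (den_pos x y r) two_pos]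
  have hgap := three_mul_den_sub_two_mul_num x y r
  have hcorr : 0 ≤ (1 - r ^ 2) * (1 + r ^ 2 + x ^ 2 + y ^ 2 + (x + r) ^ 2 + (y + r) ^ 2) :=
    mul_nonneg (sub_nonneg.mpr hr) (by positivity)
  linarith [sq_nonneg (x ^ 2 + y ^ 2 + r * x + r * y - r ^ 2), sq_nonneg (r * (x - y))]

theorem num_div_den_diag_one_eq_three_halves {a : ℝ} (ha : 2 * a ^ 2 + 2 * a = 1) :
    num a a 1 / den a a 1 = 3 / 2 := by
  rw [div_eq_div_iff (den_pos a a 1).ne' two_ne_zero]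
  have hgap := three_mul_den_sub_two_mul_num a a 1
  have hsq : a ^ 2 + a ^ 2 + 1 * a + 1 * a - 1 ^ 2 = 0 := by linarith
  rw [hsq] at hgap
  linarith

theorem two_mul_sq_add_two_mul_sqrt_three_sub_one_div_two :
    2 * ((Real.sqrt 3 - 1) / 2) ^ 2 + 2 * ((Real.sqrt 3 - 1) / 2) = 1 := by
  have h3 : Real.sqrt 3 ^ 2 = 3 := Real.sq_sqrt (by norm_num)
  linear_combination h3 / 2

end Psi

open Psi in
/-- ψ(x,y,r) = ((1+r²+2rx+x²+y²)(1+r²+2ry+x²+y²)) /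
((1+x²+y²)(1+2r²+x²+y²+2rx+2ry)) is at most 3/2 for x,y ≥ 0 and r ∈ (0,1],
with the maximum 3/2 attained at r = 1, x = y = (√3−1)/2. -/
theorem psi_le_three_halves
    (ψ : ℝ → ℝ → ℝ → ℝ)
    (hψ : ∀ x y r, ψ x y r =
      ((1 + r ^ 2 + 2 * r * x + x ^ 2 + y ^ 2) * (1 + r ^ 2 + 2 * r * y + x ^ 2 + y ^ 2)) /
        ((1 + x ^ 2 + y ^ 2) * (1 + 2 * r ^ 2 + x ^ 2 + y ^ 2 + 2 * r * x + 2 * r * y))) :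
    (∀ x y r : ℝ, 0 ≤ x → 0 ≤ y → r ∈ Set.Ioc (0:ℝ) 1 → ψ x y r ≤ 3 / 2) ∧
      ψ ((Real.sqrt 3 - 1) / 2) ((Real.sqrt 3 - 1) / 2) 1 = 3 / 2 := by
  have hψ' : ∀ x y r, ψ x y r = num x y r / den x y r := hψ
  refine ⟨fun x y r _ _ hr => ?_, ?_⟩
  · rw [hψ']
    exact num_div_den_le_three_halves x y r (pow_le_one₀ hr.1.le hr.2)
  · rw [hψ']
    exact num_div_den_diag_one_eq_three_halves two_mul_sq_add_two_mul_sqrt_three_sub_one_div_two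
end

section
/- The polynomial N(x,y) = 1 − 2x + 4x² + 2x³ + x⁴ − 2y − 8xy + 2x²y + 4y² + 2xy² + 2x²y² + 2y³ + y⁴ is non-negative on all of ℝ². -/
theorem poly_N_eq_sum_of_squares {R : Type*} [CommRing R] (x y : R) :
    1 - 2 * x + 4 * x ^ 2 + 2 * x ^ 3 + x ^ 4 - 2 * y - 8 * x * y + 2 * x ^ 2 * y
        + 4 * y ^ 2 + 2 * x * y ^ 2 + 2 * x ^ 2 * y ^ 2 + 2 * y ^ 3 + y ^ 4
      = (x ^ 2 + y ^ 2 + x + y - 1) ^ 2 + 5 * (x - y) ^ 2 := by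
  ring

/-- The polynomial N(x,y) is non-negative on all of ℝ². -/
theorem poly_N_nonneg (x y : ℝ) :
    0 ≤ 1 - 2 * x + 4 * x ^ 2 + 2 * x ^ 3 + x ^ 4 - 2 * y - 8 * x * y + 2 * x ^ 2 * y
        + 4 * y ^ 2 + 2 * x * y ^ 2 + 2 * x ^ 2 * y ^ 2 + 2 * y ^ 3 + y ^ 4 := by
  rw [poly_N_eq_sum_of_squares]
  positivity
end

section
/- For every x,y ≥ 0 and r > 0, the quantity ψ(x,y,r) = ((1+r²+2rx+x²+y²)(1+r²+2ry+x²+y²)) / ((1+x²+y²)(1+2r²+x²+y²+2rx+2ry)) is strictly increasing in r; in particular ∂ψ/∂r > 0. -/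
/-!
With `c = 1 + x² + y²`, the numerator of `ψ` is `(c + r² + 2rx)(c + r² + 2ry)` and the second
factor of the denominator is their half-sum `c + 2r² + 2rx + 2ry`; hence
`ψ = 1 + r²(r + 2x)(r + 2y) / (c (c + 2r² + 2r(x + y)))`. After dividing numerator and
denominator by `r²`, the numerator `(r + 2x)(r + 2y)` increases strictly in `r` while the
denominator `c (c / r² + 2(x + y) / r + 2)` decreases.
-/

open Set

theorem StrictMonoOn.div_of_antitoneOn {α 𝕜 : Type*} [Preorder α] [Field 𝕜] [LinearOrder 𝕜]
    [IsStrictOrderedRing 𝕜] {f g : α → 𝕜} {s : Set α} (hf : StrictMonoOn f s)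
    (hg : AntitoneOn g s) (hf₀ : ∀ a ∈ s, 0 ≤ f a) (hg₀ : ∀ a ∈ s, 0 < g a) :
    StrictMonoOn (fun a => f a / g a) s := by
  intro a ha b hb hab
  calc f a / g a ≤ f a / g b := div_le_div_of_nonneg_left (hf₀ a ha) (hg₀ b hb) (hg ha hb hab.le)
    _ < f b / g b := div_lt_div_of_pos_right (hf ha hb hab) (hg₀ b hb)

namespace Psi

noncomputable def psi (x y r : ℝ) : ℝ :=
  ((1 + r ^ 2 + 2 * r * x + x ^ 2 + y ^ 2) * (1 + r ^ 2 + 2 * r * y + x ^ 2 + y ^ 2)) /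
    ((1 + x ^ 2 + y ^ 2) * (1 + 2 * r ^ 2 + x ^ 2 + y ^ 2 + 2 * r * x + 2 * r * y))

theorem psi_eq_one_add_div {x y : ℝ} (hx : 0 ≤ x) (hy : 0 ≤ y) {r : ℝ} (hr : 0 < r) :
    psi x y r = 1 + (r + 2 * x) * (r + 2 * y) /
      ((1 + x ^ 2 + y ^ 2) * ((1 + x ^ 2 + y ^ 2) / r ^ 2 + 2 * (x + y) / r + 2)) := by
  have hD : 0 < 1 + 2 * r ^ 2 + x ^ 2 + y ^ 2 + 2 * r * x + 2 * r * y := by positivity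
  have hD' : (1 + x ^ 2 + y ^ 2) / r ^ 2 + 2 * (x + y) / r + 2 ≠ 0 := by positivity
  unfold psi
  field_simp
  ring

theorem strictMonoOn_add_mul_add {a b : ℝ} (ha : 0 ≤ a) (hb : 0 ≤ b) :
    StrictMonoOn (fun r : ℝ => (r + a) * (r + b)) (Ioi 0) := by
  intro r (hr : 0 < r) t _ hrt
  have : 0 < t + b := by linarith
  dsimp only
  gcongr

theorem antitoneOn_mul_div_sq_add_div_add (a b c d : ℝ) (ha : 0 ≤ a) (hb : 0 ≤ b) (hc : 0 ≤ c) :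
    AntitoneOn (fun r : ℝ => a * (b / r ^ 2 + c / r + d)) (Ioi 0) := by
  intro r (hr : 0 < r) t _ hrt
  dsimp only
  gcongr

end Psi

open Psi in
/-- For fixed x, y ≥ 0, the quantity ψ(x,y,r) is strictly increasing in r on (0,∞). -/
theorem psi_strictMono_in_r (x y : ℝ) (hx : 0 ≤ x) (hy : 0 ≤ y) :
    StrictMonoOn (fun r : ℝ =>
      ((1 + r ^ 2 + 2 * r * x + x ^ 2 + y ^ 2) * (1 + r ^ 2 + 2 * r * y + x ^ 2 + y ^ 2)) /
        ((1 + x ^ 2 + y ^ 2) * (1 + 2 * r ^ 2 + x ^ 2 + y ^ 2 + 2 * r * x + 2 * r * y)))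
      (Set.Ioi 0) := by
  have hc : 0 < 1 + x ^ 2 + y ^ 2 := by positivity
  have hnum := strictMonoOn_add_mul_add (a := 2 * x) (b := 2 * y) (by positivity) (by positivity)
  have hden := antitoneOn_mul_div_sq_add_div_add _ _ (2 * (x + y)) 2 hc.le hc.le (by positivity)
  have hquot := hnum.div_of_antitoneOn hden (fun r (hr : 0 < r) => by positivity)
    (fun r (hr : 0 < r) => by positivity)
  exact (hquot.const_add 1).congr fun _ hr => (psi_eq_one_add_div hx hy hr).symm
end

section
/- Let p₁, p₂ ∈ S² be points at distance D = ‖p₁−p₂‖ and let q₁, q₂ ∈ S² be points on the great circle through p₁, p₂ with q_j at arc-length distance δ_j from p_j, moving toward each other, with δ = (δ₁+δ₂)/2. Then ‖q₁−q₂‖ ≥ D cos(δ) − √(4−D²)·sin(δ) ≥ D(1−δ²/2) − √(4−D²)·δ. -/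
/-!
The chord of the shortened arc is `2 sin(Δ/2 - δ)`; expanding the sine of a difference, and
writing `2 cos(Δ/2) = √(4 - D²)` (valid since `Δ/2 ∈ [0, π/2]`), gives the first bound as an
identity. The second follows from `cos δ ≥ 1 - δ²/2` and `sin δ ≤ δ`, as both coefficients are
nonnegative.
-/

open Real

lemma sqrt_four_sub_sq_two_mul_sin {x : ℝ} (hx : 0 ≤ cos x) :
    √(4 - (2 * sin x) ^ 2) = 2 * cos x := by
  rw [show 4 - (2 * sin x) ^ 2 = (2 * cos x) ^ 2 by linear_combination (-4) * sin_sq_add_cos_sq x]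
  exact sqrt_sq (by positivity)

lemma mul_one_sub_sq_div_two_sub_mul_le_mul_cos_sub_mul_sin {a b x : ℝ} (ha : 0 ≤ a)
    (hb : 0 ≤ b) (hx : 0 ≤ x) : a * (1 - x ^ 2 / 2) - b * x ≤ a * cos x - b * sin x := by
  gcongr
  · exact one_sub_sq_div_two_le_cos
  · exact sin_le hx

/-- Separation estimate on a great circle of the unit sphere: if p₁, p₂ are at
arc distance Δ (so chord distance D = 2 sin(Δ/2)), and q₁, q₂ lie on the same
great circle at arc distances δ₁, δ₂ from p₁, p₂ respectively, moving toward
each other (so the arc from q₁ to q₂ has length Δ − δ₁ − δ₂ ≥ 0), then with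
δ = (δ₁ + δ₂)/2, the chord distance ‖q₁ − q₂‖ = 2 sin((Δ − 2δ)/2) satisfies
‖q₁−q₂‖ ≥ D cos δ − √(4−D²) sin δ ≥ D(1−δ²/2) − √(4−D²)·δ. -/
theorem great_circle_separation (Δ δ₁ δ₂ : ℝ) (h1 : 0 ≤ δ₁) (h2 : 0 ≤ δ₂)
    (h3 : δ₁ + δ₂ ≤ Δ) (hπ : Δ ≤ Real.pi) :
    2 * Real.sin ((Δ - (δ₁ + δ₂)) / 2) ≥
        (2 * Real.sin (Δ / 2)) * Real.cos ((δ₁ + δ₂) / 2)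
          - Real.sqrt (4 - (2 * Real.sin (Δ / 2)) ^ 2) * Real.sin ((δ₁ + δ₂) / 2) ∧
      (2 * Real.sin (Δ / 2)) * Real.cos ((δ₁ + δ₂) / 2)
          - Real.sqrt (4 - (2 * Real.sin (Δ / 2)) ^ 2) * Real.sin ((δ₁ + δ₂) / 2) ≥
        (2 * Real.sin (Δ / 2)) * (1 - ((δ₁ + δ₂) / 2) ^ 2 / 2)
          - Real.sqrt (4 - (2 * Real.sin (Δ / 2)) ^ 2) * ((δ₁ + δ₂) / 2) := by
  have hδ : 0 ≤ (δ₁ + δ₂) / 2 := by positivity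
  have hsin : 0 ≤ sin (Δ / 2) := sin_nonneg_of_nonneg_of_le_pi (by linarith) (by linarith [pi_pos])
  have hcos : 0 ≤ cos (Δ / 2) := cos_nonneg_of_mem_Icc ⟨by linarith [pi_pos], by linarith⟩
  rw [sqrt_four_sub_sq_two_mul_sin hcos]
  refine ⟨le_of_eq ?_,
    mul_one_sub_sq_div_two_sub_mul_le_mul_cos_sub_mul_sin (by positivity) (by positivity) hδ⟩
  rw [show (Δ - (δ₁ + δ₂)) / 2 = Δ / 2 - (δ₁ + δ₂) / 2 by ring, sin_sub]
  ring
end
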